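/- (Deterministic core of Lemma 2). Let p, n be positive integers, δ > 0, C_M > 0, C_R > 0, and set λ = (C_M + C_R) δ. Let Σ¹,…,Σⁿ be invertible symmetric real p×p matrices such that (Σᶦ)⁻¹ = M + Rᶦ for every i, where M and R¹,…,Rⁿ are symmetric p×p matrices with ‖M‖_{L1} ≤ C_M, ‖Rᶦ‖_{L1} ≤ C_R for all i, and Σ_{i=1}^n Rᶦ = 0. Let S¹,…,Sⁿ be symmetric p×p matrices with |Sᶦ − Σᶦ|_∞ ≤ δ for every i. Then any minimizer (Ω̂, R̂¹,…,R̂ⁿ) of the JNE optimization problem with data S¹,…,Sⁿ and tuning parameter λ satisfies |Ω̂ − M|_∞ ≤ 3 (C_M + C_R)² δ. -/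

import Mathlib

open Finset Matrix

/-- Entrywise `ℓ∞` norm of a matrix: the maximum absolute value of its entries. -/
noncomputable def supAbs {p : ℕ} (A : Matrix (Fin p) (Fin p) ℝ) : ℝ :=
  ⨆ i, ⨆ j, |A i j|

/-- The `L1` matrix norm: the maximum over columns of the sum of the absolute values
of the entries in that column. -/
noncomputable def colL1 {p : ℕ} (A : Matrix (Fin p) (Fin p) ℝ) : ℝ :=
  ⨆ j, ∑ i, |A i j|

/-- The JNE feasibility constraints. -/
def JNEFeasible {p n : ℕ} (S : Fin n → Matrix (Fin p) (Fin p) ℝ) (lam : ℝ)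
    (M : Matrix (Fin p) (Fin p) ℝ) (R : Fin n → Matrix (Fin p) (Fin p) ℝ) : Prop :=
  (∀ i, supAbs (S i * (M + R i) - 1) ≤ lam) ∧ ∑ i, R i = 0

/-- The JNE objective `‖M‖_{L1} + (1/n) ∑ᵢ ‖Rᶦ‖_{L1}`. -/
noncomputable def JNEObjective {p n : ℕ} (M : Matrix (Fin p) (Fin p) ℝ)
    (R : Fin n → Matrix (Fin p) (Fin p) ℝ) : ℝ :=
  colL1 M + (1 / (n : ℝ)) * ∑ i, colL1 (R i)

/-- `(Ω̂, R̂¹, …, R̂ⁿ)` is a joint nonparametric estimator: a feasible minimizer of the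
JNE objective. -/
def IsJNE {p n : ℕ} (S : Fin n → Matrix (Fin p) (Fin p) ℝ) (lam : ℝ)
    (Ohat : Matrix (Fin p) (Fin p) ℝ) (Rhat : Fin n → Matrix (Fin p) (Fin p) ℝ) : Prop :=
  JNEFeasible S lam Ohat Rhat ∧
    ∀ M R, JNEFeasible S lam M R → JNEObjective Ohat Rhat ≤ JNEObjective M R

section aux
variable {p : ℕ}

lemma abs_le_supAbs (A : Matrix (Fin p) (Fin p) ℝ) (i j : Fin p) :
    |A i j| ≤ supAbs A := by
  have h1 : |A i j| ≤ ⨆ j, |A i j| :=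
    le_ciSup (f := fun j => |A i j|) (Set.Finite.bddAbove (Set.finite_range _)) j
  exact h1.trans
    (le_ciSup (f := fun i => ⨆ j, |A i j|) (Set.Finite.bddAbove (Set.finite_range _)) i)

lemma supAbs_le (hp : 0 < p) {A : Matrix (Fin p) (Fin p) ℝ} {c : ℝ}
    (h : ∀ i j, |A i j| ≤ c) : supAbs A ≤ c := by
  haveI : Nonempty (Fin p) := ⟨⟨0, hp⟩⟩
  exact ciSup_le fun i => ciSup_le fun j => h i j

lemma supAbs_nonneg (hp : 0 < p) (A : Matrix (Fin p) (Fin p) ℝ) : 0 ≤ supAbs A :=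
  le_trans (abs_nonneg _) (abs_le_supAbs A ⟨0, hp⟩ ⟨0, hp⟩)

lemma sum_abs_le_colL1 (A : Matrix (Fin p) (Fin p) ℝ) (j : Fin p) :
    ∑ i, |A i j| ≤ colL1 A :=
  le_ciSup (f := fun j => ∑ i, |A i j|) (Set.Finite.bddAbove (Set.finite_range _)) j

lemma colL1_le (hp : 0 < p) {A : Matrix (Fin p) (Fin p) ℝ} {c : ℝ}
    (h : ∀ j, ∑ i, |A i j| ≤ c) : colL1 A ≤ c := by
  haveI : Nonempty (Fin p) := ⟨⟨0, hp⟩⟩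
  exact ciSup_le h

lemma colL1_nonneg (hp : 0 < p) (A : Matrix (Fin p) (Fin p) ℝ) : 0 ≤ colL1 A :=
  le_trans (Finset.sum_nonneg fun i _ => abs_nonneg _) (sum_abs_le_colL1 A ⟨0, hp⟩)

lemma colL1_add_le (hp : 0 < p) (A B : Matrix (Fin p) (Fin p) ℝ) :
    colL1 (A + B) ≤ colL1 A + colL1 B := by
  refine colL1_le hp fun j => ?_
  calc ∑ i, |(A + B) i j| ≤ ∑ i, (|A i j| + |B i j|) :=
        Finset.sum_le_sum fun i _ => abs_add_le _ _
    _ = (∑ i, |A i j|) + ∑ i, |B i j| := Finset.sum_add_distrib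
    _ ≤ colL1 A + colL1 B := add_le_add (sum_abs_le_colL1 A j) (sum_abs_le_colL1 B j)

lemma supAbs_add_le (hp : 0 < p) (A B : Matrix (Fin p) (Fin p) ℝ) :
    supAbs (A + B) ≤ supAbs A + supAbs B :=
  supAbs_le hp fun i j =>
    (abs_add_le _ _).trans (add_le_add (abs_le_supAbs A i j) (abs_le_supAbs B i j))

lemma supAbs_mul_le (hp : 0 < p) (A B : Matrix (Fin p) (Fin p) ℝ) :
    supAbs (A * B) ≤ supAbs A * colL1 B := by
  refine supAbs_le hp fun i j => ?_
  rw [Matrix.mul_apply]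
  calc |∑ k, A i k * B k j| ≤ ∑ k, |A i k * B k j| := Finset.abs_sum_le_sum_abs _ _
    _ = ∑ k, |A i k| * |B k j| := by simp [abs_mul]
    _ ≤ ∑ k, supAbs A * |B k j| :=
        Finset.sum_le_sum fun k _ => mul_le_mul_of_nonneg_right (abs_le_supAbs A i k) (abs_nonneg _)
    _ = supAbs A * ∑ k, |B k j| := by rw [Finset.mul_sum]
    _ ≤ supAbs A * colL1 B :=
        mul_le_mul_of_nonneg_left (sum_abs_le_colL1 B j) (supAbs_nonneg hp A)

lemma supAbs_symm_mul_le (hp : 0 < p) {A : Matrix (Fin p) (Fin p) ℝ} (hA : A.IsSymm)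
    (B : Matrix (Fin p) (Fin p) ℝ) :
    supAbs (A * B) ≤ colL1 A * supAbs B := by
  refine supAbs_le hp fun i j => ?_
  rw [Matrix.mul_apply]
  calc |∑ k, A i k * B k j| ≤ ∑ k, |A i k * B k j| := Finset.abs_sum_le_sum_abs _ _
    _ = ∑ k, |A k i| * |B k j| := by
        refine Finset.sum_congr rfl fun k _ => ?_
        rw [abs_mul, hA.apply k i]
    _ ≤ ∑ k, |A k i| * supAbs B :=
        Finset.sum_le_sum fun k _ => mul_le_mul_of_nonneg_left (abs_le_supAbs B k j) (abs_nonneg _)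
    _ = (∑ k, |A k i|) * supAbs B := by rw [Finset.sum_mul]
    _ ≤ colL1 A * supAbs B :=
        mul_le_mul_of_nonneg_right (sum_abs_le_colL1 A i) (supAbs_nonneg hp B)

end aux

/-- **Deterministic core of Lemma 2.**
If the symmetric invertible matrices `Σᶦ` satisfy `(Σᶦ)⁻¹ = M + Rᶦ` with symmetric
`M`, `Rᶦ` such that `‖M‖_{L1} ≤ C_M`, `‖Rᶦ‖_{L1} ≤ C_R`, `∑ᵢ Rᶦ = 0`, and the
symmetric matrices `Sᶦ` satisfy `|Sᶦ - Σᶦ|_∞ ≤ δ`, then any minimizer of the JNE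
optimization problem with tuning parameter `λ = (C_M + C_R) δ` satisfies
`|Ω̂ - M|_∞ ≤ 3 (C_M + C_R)² δ`. -/
theorem deterministic_core_lemma2 {p n : ℕ} (hp : 0 < p) (hn : 0 < n)
    (δ CM CR lam : ℝ) (hδ : 0 < δ) (hCM : 0 < CM) (hCR : 0 < CR)
    (hlam : lam = (CM + CR) * δ)
    (Sig : Fin n → Matrix (Fin p) (Fin p) ℝ)
    (hSigUnit : ∀ i, IsUnit (Sig i)) (hSigSymm : ∀ i, (Sig i).IsSymm)
    (M : Matrix (Fin p) (Fin p) ℝ) (R : Fin n → Matrix (Fin p) (Fin p) ℝ)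
    (hMsymm : M.IsSymm) (hRsymm : ∀ i, (R i).IsSymm)
    (hinv : ∀ i, (Sig i)⁻¹ = M + R i)
    (hM : colL1 M ≤ CM) (hR : ∀ i, colL1 (R i) ≤ CR)
    (hRsum : ∑ i, R i = 0)
    (S : Fin n → Matrix (Fin p) (Fin p) ℝ) (hSsymm : ∀ i, (S i).IsSymm)
    (hS : ∀ i, supAbs (S i - Sig i) ≤ δ)
    (Ohat : Matrix (Fin p) (Fin p) ℝ) (Rhat : Fin n → Matrix (Fin p) (Fin p) ℝ)
    (hJNE : IsJNE S lam Ohat Rhat) :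
    supAbs (Ohat - M) ≤ 3 * (CM + CR) ^ 2 * δ := by
  set K := CM + CR with hK
  have hK0 : 0 < K := by positivity
  -- Σᶦ (M + Rᶦ) = 1 and (M + Rᶦ) Σᶦ = 1
  have hdet : ∀ i, IsUnit (Sig i).det := fun i =>
    (Matrix.isUnit_iff_isUnit_det _).mp (hSigUnit i)
  have hmul1 : ∀ i, Sig i * (M + R i) = 1 := fun i => by
    rw [← hinv i]; exact Matrix.mul_nonsing_inv _ (hdet i)
  have hmul1' : ∀ i, (M + R i) * Sig i = 1 := fun i => by
    rw [← hinv i]; exact Matrix.nonsing_inv_mul _ (hdet i)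
  have hMRcol : ∀ i, colL1 (M + R i) ≤ K := fun i =>
    (colL1_add_le hp M (R i)).trans (add_le_add hM (hR i))
  -- feasibility of (M, R)
  have hfeasMR : JNEFeasible S lam M R := by
    refine ⟨fun i => ?_, hRsum⟩
    have hid : S i * (M + R i) - 1 = (S i - Sig i) * (M + R i) := by
      rw [Matrix.sub_mul, hmul1 i]
    rw [hid, hlam]
    calc supAbs ((S i - Sig i) * (M + R i)) ≤ supAbs (S i - Sig i) * colL1 (M + R i) :=
          supAbs_mul_le hp _ _
      _ ≤ δ * K := mul_le_mul (hS i) (hMRcol i) (colL1_nonneg hp _) hδ.le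
      _ = K * δ := mul_comm _ _
  -- minimality
  obtain ⟨⟨hOfeas, hRhatsum⟩, hmin⟩ := hJNE
  have hn0 : (0:ℝ) < (n:ℝ) := by exact_mod_cast hn
  have hobjMR : JNEObjective M R ≤ K := by
    unfold JNEObjective
    have : ∑ i, colL1 (R i) ≤ ∑ _i : Fin n, CR := Finset.sum_le_sum fun i _ => hR i
    have h2 : (1 / (n:ℝ)) * ∑ i, colL1 (R i) ≤ CR := by
      rw [Finset.sum_const, Finset.card_univ, Fintype.card_fin, nsmul_eq_mul] at this
      calc (1 / (n:ℝ)) * ∑ i, colL1 (R i) ≤ (1 / (n:ℝ)) * ((n:ℝ) * CR) :=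
            mul_le_mul_of_nonneg_left this (by positivity)
        _ = CR := by field_simp
    exact add_le_add hM h2
  have hobj : colL1 Ohat + (1 / (n:ℝ)) * ∑ i, colL1 (Rhat i) ≤ K :=
    (hmin M R hfeasMR).trans hobjMR
  have hRhatnn : ∀ i, (0:ℝ) ≤ colL1 (Rhat i) := fun i => colL1_nonneg hp _
  have hOnn : (0:ℝ) ≤ colL1 Ohat := colL1_nonneg hp _
  -- per-i bound on D i := Ohat + Rhat i - (M + R i)
  have hD : ∀ i, supAbs (Ohat + Rhat i - (M + R i)) ≤
      K * (lam + δ * (colL1 Ohat + colL1 (Rhat i))) := by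
    intro i
    have hid : Ohat + Rhat i - (M + R i) = (M + R i) * (Sig i * (Ohat + Rhat i) - 1) := by
      rw [Matrix.mul_sub, ← Matrix.mul_assoc, hmul1' i]
      simp only [Matrix.one_mul, Matrix.mul_one]
    have hE : supAbs (Sig i * (Ohat + Rhat i) - 1) ≤ lam + δ * (colL1 Ohat + colL1 (Rhat i)) := by
      have hid2 : Sig i * (Ohat + Rhat i) - 1 =
          (S i * (Ohat + Rhat i) - 1) + (Sig i - S i) * (Ohat + Rhat i) := by
        rw [Matrix.sub_mul]; abel
      rw [hid2]
      refine (supAbs_add_le hp _ _).trans (add_le_add (hOfeas i) ?_)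
      calc supAbs ((Sig i - S i) * (Ohat + Rhat i))
          ≤ supAbs (Sig i - S i) * colL1 (Ohat + Rhat i) := supAbs_mul_le hp _ _
        _ ≤ δ * (colL1 Ohat + colL1 (Rhat i)) := by
            refine mul_le_mul ?_ (colL1_add_le hp _ _) (colL1_nonneg hp _) hδ.le
            have heq : supAbs (Sig i - S i) = supAbs (S i - Sig i) := by
              unfold supAbs
              simp only [Matrix.sub_apply, abs_sub_comm]
            rw [heq]; exact hS i
    have hsymm : (M + R i).IsSymm := hMsymm.add (hRsymm i)
    rw [hid]
    calc supAbs ((M + R i) * (Sig i * (Ohat + Rhat i) - 1))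
        ≤ colL1 (M + R i) * supAbs (Sig i * (Ohat + Rhat i) - 1) :=
          supAbs_symm_mul_le hp hsymm _
      _ ≤ K * (lam + δ * (colL1 Ohat + colL1 (Rhat i))) := by
          refine mul_le_mul (hMRcol i) hE (supAbs_nonneg hp _) hK0.le
  -- average over i
  have havg : Ohat - M = (1 / (n:ℝ)) • ∑ i, (Ohat + Rhat i - (M + R i)) := by
    have : ∑ i, (Ohat + Rhat i - (M + R i)) = (n:ℝ) • (Ohat - M) := by
      simp [Finset.sum_sub_distrib, Finset.sum_add_distrib, hRhatsum, hRsum, smul_sub,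
        Nat.cast_smul_eq_nsmul, Finset.card_univ]
    rw [this, smul_smul]
    rw [one_div, inv_mul_cancel₀ hn0.ne', one_smul]
  -- finish entrywise
  refine supAbs_le hp fun a b => ?_
  rw [havg]
  have habs : |((1 / (n:ℝ)) • ∑ i, (Ohat + Rhat i - (M + R i))) a b| ≤
      (1 / (n:ℝ)) * ∑ i, supAbs (Ohat + Rhat i - (M + R i)) := by
    simp only [Matrix.smul_apply, smul_eq_mul, abs_mul, Matrix.sum_apply]
    rw [abs_of_nonneg (by positivity : (0:ℝ) ≤ 1 / (n:ℝ))]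
    refine mul_le_mul_of_nonneg_left ?_ (by positivity)
    exact (Finset.abs_sum_le_sum_abs _ _).trans
      (Finset.sum_le_sum fun i _ => abs_le_supAbs _ a b)
  refine habs.trans ?_
  have hsum : ∑ i, supAbs (Ohat + Rhat i - (M + R i)) ≤
      ∑ i, K * (lam + δ * (colL1 Ohat + colL1 (Rhat i))) :=
    Finset.sum_le_sum fun i _ => hD i
  have hsplit : ∑ i, K * (lam + δ * (colL1 Ohat + colL1 (Rhat i)))
      = (n:ℝ) * (K * (lam + δ * colL1 Ohat)) + K * δ * ∑ i, colL1 (Rhat i) := by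
    have h1 : ∀ i : Fin n, K * (lam + δ * (colL1 Ohat + colL1 (Rhat i)))
        = K * (lam + δ * colL1 Ohat) + K * δ * colL1 (Rhat i) := fun i => by ring
    rw [Finset.sum_congr rfl fun i _ => h1 i, Finset.sum_add_distrib, Finset.sum_const,
      Finset.card_univ, Fintype.card_fin, nsmul_eq_mul, ← Finset.mul_sum]
  have hstep : (1 / (n:ℝ)) * ∑ i, supAbs (Ohat + Rhat i - (M + R i)) ≤
      K * (lam + δ * colL1 Ohat) + K * δ * ((1 / (n:ℝ)) * ∑ i, colL1 (Rhat i)) := by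
    calc (1 / (n:ℝ)) * ∑ i, supAbs (Ohat + Rhat i - (M + R i))
        ≤ (1 / (n:ℝ)) * ∑ i, K * (lam + δ * (colL1 Ohat + colL1 (Rhat i))) :=
          mul_le_mul_of_nonneg_left hsum (by positivity)
      _ = K * (lam + δ * colL1 Ohat) + K * δ * ((1 / (n:ℝ)) * ∑ i, colL1 (Rhat i)) := by
          rw [hsplit]; field_simp
  refine hstep.trans ?_
  set T := (1 / (n:ℝ)) * ∑ i, colL1 (Rhat i) with hT
  have hTnn : 0 ≤ T := by
    refine mul_nonneg (by positivity) (Finset.sum_nonneg fun i _ => hRhatnn i)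
  rw [hlam]
  nlinarith [mul_le_mul_of_nonneg_left hobj (mul_nonneg hK0.le hδ.le), hOnn, hK0, hδ]
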